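/- Let n ≥ 2 and let (H_k)_{k∈ℕ} be a sequence of non-trivial subgroups of the free group F_n. If lim_{k→∞} i(Γ_{H_k}) = (n−1)/n = i(T_n), then lim_{k→∞} growth(Γ_{H_k}) = 2n−1 = growth(T_n). -/

import Mathlib

open Filter Real

noncomputable section

namespace JM

/-- The free group of rank `n`. -/
abbrev F (n : ℕ) := FreeGroup (Fin n)

/-- The Poincaré exponent of a subgroup `G` of the free group, with respect to the
word metric of the standard free generating set. -/
def poincareExponent (n : ℕ) (G : Subgroup (F n)) : ℝ :=
  limsup (fun R : ℕ =>
    Real.log (Nat.card {g : F n // g ∈ G ∧ FreeGroup.norm g ≤ R}) / R) atTop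

/-- `G` is of divergence type if its Poincaré series diverges at the exponent. -/
def DivergenceType (n : ℕ) (G : Subgroup (F n)) : Prop :=
  ¬ Summable (fun g : G => Real.exp (-(poincareExponent n G) * FreeGroup.norm (g : F n)))

/-- The vertex set of the quotient graph `Γ_H = T_n/H`: the right cosets `Hg`. -/
abbrev Cosets (n : ℕ) (H : Subgroup (F n)) := Quotient (QuotientGroup.rightRel H)

/-- Right multiplication on right cosets: `Hg ↦ Hga`. -/
def rmul {n : ℕ} {H : Subgroup (F n)} (x : Cosets n H) (a : F n) : Cosets n H :=
  Quotient.liftOn x (fun g => Quotient.mk (QuotientGroup.rightRel H) (g * a))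
    (fun b c h => Quotient.sound (by
      have h' := QuotientGroup.rightRel_apply.mp h
      show (QuotientGroup.rightRel H) _ _
      rw [QuotientGroup.rightRel_apply]
      simpa [mul_assoc] using h'))

/-- Distance from the base vertex `H` to the vertex `Hg` in the quotient graph,
namely `min_{h ∈ H} |hg|`. -/
def cosetDist {n : ℕ} {H : Subgroup (F n)} (x : Cosets n H) : ℕ :=
  sInf (FreeGroup.norm '' {g : F n | Quotient.mk (QuotientGroup.rightRel H) g = x})

/-- The exponential growth rate of the quotient graph `Γ_H = T_n/H`. -/
def graphGrowth (n : ℕ) (H : Subgroup (F n)) : ℝ :=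
  limsup (fun R : ℕ =>
    (Nat.card {x : Cosets n H // cosetDist x ≤ R} : ℝ) ^ (1 / (R : ℝ))) atTop

/-- the generators `S ∪ S⁻¹`, indexed by `Fin n × Bool`. -/
def sgen {n : ℕ} (p : Fin n × Bool) : F n :=
  if p.2 then FreeGroup.of p.1 else (FreeGroup.of p.1)⁻¹

/-- The number of boundary edges of a finite set `A` of vertices of `Γ_H`. -/
def boundaryCard {n : ℕ} {H : Subgroup (F n)} (A : Finset (Cosets n H)) : ℕ :=
  Nat.card {p : Cosets n H × (Fin n × Bool) // p.1 ∈ A ∧ rmul p.1 (sgen p.2) ∉ A}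

/-- The isoperimetric constant of the `2n`-regular graph `Γ_H`. -/
def isoConst (n : ℕ) (H : Subgroup (F n)) : ℝ :=
  sInf {r : ℝ | ∃ A : Finset (Cosets n H), A.Nonempty ∧
    r = (boundaryCard A : ℝ) / (2 * n * A.card)}

/-- The bottom of the spectrum of the discrete Laplacian on `Γ_H`, as the infimum of
Rayleigh quotients of finitely supported nonzero functions. -/
def lambdaZero (n : ℕ) (H : Subgroup (F n)) : ℝ :=
  sInf {r : ℝ | ∃ f : Cosets n H → ℝ, (Function.support f).Finite ∧ f ≠ 0 ∧
    r = (∑ᶠ x, ∑ i : Fin n, (f x - f (rmul x (FreeGroup.of i))) ^ 2) /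
        (2 * n * ∑ᶠ x, (f x) ^ 2)}

/-- The transition operator of the simple random walk on `Γ_H`. -/
def transOp {n : ℕ} {H : Subgroup (F n)} (f : Cosets n H → ℝ) (x : Cosets n H) : ℝ :=
  (1 / (2 * n)) * ∑ p : Fin n × Bool, f (rmul x (sgen p))

/-- The spectral radius of the transition operator `P` of the simple random walk on
`Γ_N`: since `P` is bounded and self-adjoint on `ℓ²`, its spectral radius equals its
operator norm, i.e. the supremum of `‖Pf‖/‖f‖` over finitely supported nonzero `f`. -/
def specRad (n : ℕ) (H : Subgroup (F n)) : ℝ :=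
  sSup {r : ℝ | ∃ f : Cosets n H → ℝ, (Function.support f).Finite ∧ f ≠ 0 ∧
    r = Real.sqrt (∑ᶠ x, (transOp f x) ^ 2) / Real.sqrt (∑ᶠ x, (f x) ^ 2)}

/-!
Let `N_R` be the number of vertices of `Γ_H` within distance `R` of the base vertex, and
`i = i(Γ_H)`. Deleting the last letter of a geodesic representative shows that every vertex at
distance `R + 1` has a neighbour at distance `R`. Hence at most `2n - 1` edges at such a vertex
lead outwards, so `N_R ≤ (R + 1)·2n(2n - 1)^R` and `growth(Γ_H) ≤ 2n - 1`. In the ball of radius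
`R + 1`, the same fact gives at least `2n·N_R + (N_{R+1} - N_R)` edges that stay inside the ball,
and the isoperimetric inequality bounds the remaining ones from below; this yields
`(2n - 1)·N_R ≤ ((1 - i)·2n - 1)·N_{R+1}`, hence `growth(Γ_H) ≥ (2n - 1)/((1 - i)·2n - 1)`,
which tends to `2n - 1` as `i → (n - 1)/n`.
-/

section QuotientGraph

variable {n : ℕ} {H : Subgroup (F n)}

lemma rmul_mk (g a : F n) :
    rmul (Quotient.mk (QuotientGroup.rightRel H) g) a
      = Quotient.mk (QuotientGroup.rightRel H) (g * a) := rfl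

lemma rmul_rmul (x : Cosets n H) (a b : F n) : rmul (rmul x a) b = rmul x (a * b) := by
  induction x using Quotient.inductionOn with
  | h g => simp only [rmul_mk, mul_assoc]

lemma rmul_one (x : Cosets n H) : rmul x 1 = x := by
  induction x using Quotient.inductionOn with
  | h g => rw [rmul_mk, mul_one]

lemma sgen_eq_mk (p : Fin n × Bool) : sgen p = FreeGroup.mk [p] := by
  obtain ⟨s, _ | _⟩ := p
  · simp [sgen, FreeGroup.of, FreeGroup.inv_mk, FreeGroup.invRev]
  · rfl

lemma sgen_not (p : Fin n × Bool) : sgen (p.1, !p.2) = (sgen p)⁻¹ := by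
  obtain ⟨s, _ | _⟩ := p <;> simp [sgen]

lemma norm_sgen (p : Fin n × Bool) : FreeGroup.norm (sgen p) = 1 := by
  obtain ⟨s, _ | _⟩ := p <;> simp [sgen, FreeGroup.norm_of]

lemma rmul_rmul_sgen_not (x : Cosets n H) (p : Fin n × Bool) :
    rmul (rmul x (sgen p)) (sgen (p.1, !p.2)) = x := by
  rw [rmul_rmul, sgen_not, mul_inv_cancel, rmul_one]

lemma cosetDist_mk_le (g : F n) :
    cosetDist (Quotient.mk (QuotientGroup.rightRel H) g) ≤ FreeGroup.norm g :=
  Nat.sInf_le ⟨g, rfl, rfl⟩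

lemma exists_norm_eq_cosetDist (x : Cosets n H) :
    ∃ g : F n, Quotient.mk (QuotientGroup.rightRel H) g = x ∧ FreeGroup.norm g = cosetDist x := by
  obtain ⟨g₀, rfl⟩ := Quotient.exists_rep x
  exact Nat.sInf_mem (s := FreeGroup.norm '' {g : F n | Quotient.mk _ g = Quotient.mk _ g₀})
    ⟨FreeGroup.norm g₀, g₀, rfl, rfl⟩

lemma eq_mk_one_of_cosetDist_eq_zero {x : Cosets n H} (h : cosetDist x = 0) :
    x = Quotient.mk (QuotientGroup.rightRel H) 1 := by
  obtain ⟨g, rfl, hg⟩ := exists_norm_eq_cosetDist x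
  rw [FreeGroup.norm_eq_zero.mp (hg.trans h)]

lemma cosetDist_rmul_sgen_le (x : Cosets n H) (p : Fin n × Bool) :
    cosetDist (rmul x (sgen p)) ≤ cosetDist x + 1 := by
  obtain ⟨g, rfl, hg⟩ := exists_norm_eq_cosetDist x
  calc cosetDist (rmul (Quotient.mk (QuotientGroup.rightRel H) g) (sgen p))
      ≤ FreeGroup.norm (g * sgen p) := cosetDist_mk_le _
    _ ≤ FreeGroup.norm g + FreeGroup.norm (sgen p) := FreeGroup.norm_mul_le _ _
    _ = _ := by rw [hg, norm_sgen]

lemma exists_cosetDist_rmul_sgen_le {x : Cosets n H} {R : ℕ} (h : cosetDist x = R + 1) :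
    ∃ p : Fin n × Bool, cosetDist (rmul x (sgen p)) ≤ R := by
  obtain ⟨g, rfl, hg⟩ := exists_norm_eq_cosetDist x
  have hw : (FreeGroup.toWord g).length = R + 1 := hg.trans h
  have hne : FreeGroup.toWord g ≠ [] := List.ne_nil_of_length_eq_add_one hw
  set a := (FreeGroup.toWord g).getLast hne
  refine ⟨(a.1, !a.2), ?_⟩
  have hsplit : g = FreeGroup.mk (FreeGroup.toWord g).dropLast * sgen a := by
    rw [sgen_eq_mk, FreeGroup.mul_mk, List.dropLast_append_getLast hne, FreeGroup.mk_toWord]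
  calc cosetDist (rmul (Quotient.mk (QuotientGroup.rightRel H) g) (sgen (a.1, !a.2)))
      ≤ FreeGroup.norm (FreeGroup.mk (FreeGroup.toWord g).dropLast) := by
        rw [rmul_mk, sgen_not]
        nth_rewrite 1 [hsplit]
        rw [mul_inv_cancel_right]
        exact cosetDist_mk_le _
    _ ≤ (FreeGroup.toWord g).dropLast.length := FreeGroup.norm_mk_le
    _ = R := by simp [hw]

lemma finite_setOf_norm_le (R : ℕ) : {g : F n | FreeGroup.norm g ≤ R}.Finite :=
  (List.finite_length_le _ R).preimage FreeGroup.toWord_injective.injOn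

lemma finite_setOf_cosetDist_le (R : ℕ) : {x : Cosets n H | cosetDist x ≤ R}.Finite := by
  refine ((finite_setOf_norm_le R).image (Quotient.mk (QuotientGroup.rightRel H))).subset ?_
  intro x hx
  obtain ⟨g, hgx, hg⟩ := exists_norm_eq_cosetDist x
  exact ⟨g, hg.trans_le hx, hgx⟩

variable (n H) in
def cosetBall (R : ℕ) : Finset (Cosets n H) := (finite_setOf_cosetDist_le R).toFinset

variable (n H) in
def cosetSphere (R : ℕ) : Finset (Cosets n H) := (cosetBall n H R).filter (cosetDist · = R)

@[simp]
lemma mem_cosetBall {R : ℕ} {x : Cosets n H} : x ∈ cosetBall n H R ↔ cosetDist x ≤ R :=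
  Set.Finite.mem_toFinset _

lemma cosetBall_subset_succ (R : ℕ) : cosetBall n H R ⊆ cosetBall n H (R + 1) :=
  fun _ hx => mem_cosetBall.mpr (Nat.le_succ_of_le (mem_cosetBall.mp hx))

@[simp]
lemma mem_cosetSphere {R : ℕ} {x : Cosets n H} : x ∈ cosetSphere n H R ↔ cosetDist x = R := by
  simp only [cosetSphere, Finset.mem_filter, mem_cosetBall, and_iff_right_iff_imp]
  exact le_of_eq

variable (n H) in
lemma graphGrowth_eq :
    graphGrowth n H = limsup (fun R : ℕ => ((cosetBall n H R).card : ℝ) ^ (1 / (R : ℝ))) atTop := by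
  have hcard (R : ℕ) : Nat.card {x : Cosets n H // cosetDist x ≤ R} = (cosetBall n H R).card :=
    Nat.card_eq_card_finite_toFinset (finite_setOf_cosetDist_le R)
  simp only [graphGrowth, hcard]

end QuotientGraph

section UpperBound

open scoped Classical Topology

variable {n : ℕ} {H : Subgroup (F n)}

lemma card_cosetSphere_zero_le : (cosetSphere n H 0).card ≤ 1 :=
  Finset.card_le_one.mpr fun x hx y hy => by
    rw [eq_mk_one_of_cosetDist_eq_zero (mem_cosetSphere.mp hx),
      eq_mk_one_of_cosetDist_eq_zero (mem_cosetSphere.mp hy)]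

lemma card_cosetSphere_succ_le_sum (R : ℕ) :
    (cosetSphere n H (R + 1)).card ≤ ∑ y ∈ cosetSphere n H R,
      (Finset.univ.filter fun p => rmul y (sgen p) ∈ cosetSphere n H (R + 1)).card := by
  refine (Finset.card_le_card ?_).trans <| Finset.card_biUnion_le.trans <|
    Finset.sum_le_sum fun y _ => Finset.card_image_le (f := fun p => rmul y (sgen p))
  intro x hx
  have hx := mem_cosetSphere.mp hx
  obtain ⟨p, hp⟩ := exists_cosetDist_rmul_sgen_le hx
  have hback := rmul_rmul_sgen_not x p
  have hy : cosetDist (rmul x (sgen p)) = R := by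
    have := cosetDist_rmul_sgen_le (rmul x (sgen p)) (p.1, !p.2)
    rw [hback] at this
    omega
  simp only [Finset.mem_biUnion, Finset.mem_image, Finset.mem_filter, Finset.mem_univ, true_and,
    mem_cosetSphere]
  exact ⟨_, hy, _, hback.symm ▸ hx, hback⟩

lemma card_outward_sgen_le {R : ℕ} {y : Cosets n H} (hy : cosetDist y = R + 1) :
    (Finset.univ.filter fun p => rmul y (sgen p) ∈ cosetSphere n H (R + 2)).card ≤ 2 * n - 1 := by
  obtain ⟨p₀, hp₀⟩ := exists_cosetDist_rmul_sgen_le hy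
  calc _ ≤ (Finset.univ.erase p₀).card := by
        refine Finset.card_le_card fun p hp => Finset.mem_erase.mpr ⟨?_, Finset.mem_univ _⟩
        rintro rfl
        have := mem_cosetSphere.mp (Finset.mem_filter.mp hp).2
        omega
    _ = 2 * n - 1 := by simp [Finset.card_erase_of_mem, mul_comm]

lemma card_cosetSphere_succ_le (R : ℕ) :
    (cosetSphere n H (R + 1)).card ≤ 2 * n * (2 * n - 1) ^ R := by
  induction R with
  | zero =>
    calc _ ≤ ∑ y ∈ cosetSphere n H 0, 2 * n :=
          (card_cosetSphere_succ_le_sum 0).trans <| Finset.sum_le_sum fun _ _ =>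
            (Finset.card_filter_le _ _).trans (by simp [mul_comm])
      _ ≤ 2 * n * (2 * n - 1) ^ 0 := by
          simpa [mul_comm] using Nat.mul_le_mul_left (2 * n) card_cosetSphere_zero_le
  | succ R ih =>
    calc _ ≤ ∑ y ∈ cosetSphere n H (R + 1), (2 * n - 1) :=
          (card_cosetSphere_succ_le_sum (R + 1)).trans <| Finset.sum_le_sum fun _ hy =>
            card_outward_sgen_le (mem_cosetSphere.mp hy)
      _ ≤ 2 * n * (2 * n - 1) ^ (R + 1) := by
          rw [Finset.sum_const, smul_eq_mul, pow_succ, ← mul_assoc]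
          exact Nat.mul_le_mul_right _ ih

lemma card_cosetBall_le (hn : 1 ≤ n) (R : ℕ) :
    (cosetBall n H R).card ≤ (R + 1) * (2 * n * (2 * n - 1) ^ R) := by
  have hsphere (j : ℕ) (hj : j ≤ R) : (cosetSphere n H j).card ≤ 2 * n * (2 * n - 1) ^ R := by
    have hmono : 2 * n * (2 * n - 1) ^ (j - 1) ≤ 2 * n * (2 * n - 1) ^ R :=
      Nat.mul_le_mul_left _ (Nat.pow_le_pow_right (by omega) (by omega))
    rcases j with _ | j
    · exact card_cosetSphere_zero_le.trans (Nat.mul_pos (by omega) (pow_pos (by omega) _))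
    · exact (card_cosetSphere_succ_le j).trans hmono
  calc (cosetBall n H R).card
      ≤ ((Finset.range (R + 1)).biUnion (cosetSphere n H)).card := by
        refine Finset.card_le_card fun x hx => ?_
        simp only [Finset.mem_biUnion, Finset.mem_range, mem_cosetSphere]
        exact ⟨_, Nat.lt_succ_of_le (mem_cosetBall.mp hx), rfl⟩
    _ ≤ ∑ j ∈ Finset.range (R + 1), (cosetSphere n H j).card := Finset.card_biUnion_le
    _ ≤ (R + 1) * (2 * n * (2 * n - 1) ^ R) := by
        simpa using Finset.sum_le_card_nsmul _ _ _ fun j hj =>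
          hsphere j (Nat.le_of_lt_succ (Finset.mem_range.mp hj))

lemma tendsto_succ_mul_mul_pow_rpow_one_div {C D : ℝ} (hC : 0 < C) (hD : 0 ≤ D) :
    Tendsto (fun R : ℕ => (((R : ℝ) + 1) * C * D ^ R) ^ (1 / (R : ℝ))) atTop (𝓝 D) := by
  have hsucc : Tendsto (fun R : ℕ => ((R : ℝ) + 1) ^ (1 / (R : ℝ))) atTop (𝓝 1) := by
    have := (tendsto_rpow_div_mul_add 1 1 (-1) one_ne_zero.symm).comp
      (tendsto_atTop_add_const_right _ 1 tendsto_natCast_atTop_atTop)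
    simpa [Function.comp_def] using this
  have hconst : Tendsto (fun R : ℕ => C ^ (1 / (R : ℝ))) atTop (𝓝 1) := by
    simpa using tendsto_const_nhds.rpow (tendsto_const_div_atTop_nhds_zero_nat 1) (Or.inl hC.ne')
  refine ((hsucc.mul hconst).mul_const D).congr' ?_ |>.trans (by simp)
  filter_upwards [eventually_ne_atTop 0] with R hR
  rw [Real.mul_rpow (by positivity) (by positivity), Real.mul_rpow (by positivity) hC.le,
    one_div, Real.pow_rpow_inv_natCast hD hR]

lemma rpow_card_cosetBall_le (hn : 1 ≤ n) (R : ℕ) :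
    ((cosetBall n H R).card : ℝ) ^ (1 / (R : ℝ)) ≤
      (((R : ℝ) + 1) * (2 * n) * (2 * n - 1) ^ R) ^ (1 / (R : ℝ)) := by
  refine Real.rpow_le_rpow (Nat.cast_nonneg _) ?_ (by positivity)
  have h := (Nat.cast_le (α := ℝ)).mpr (card_cosetBall_le (H := H) hn R)
  push_cast [Nat.cast_sub (by omega : 1 ≤ 2 * n)] at h
  linarith

lemma tendsto_growth_bound (hn : 1 ≤ n) :
    Tendsto (fun R : ℕ => (((R : ℝ) + 1) * (2 * n) * (2 * n - 1) ^ R) ^ (1 / (R : ℝ)))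
      atTop (𝓝 (2 * n - 1)) := by
  have : (1 : ℝ) ≤ n := by exact_mod_cast hn
  exact tendsto_succ_mul_mul_pow_rpow_one_div (by positivity) (by linarith)

lemma isBoundedUnder_rpow_card_cosetBall (hn : 1 ≤ n) :
    IsBoundedUnder (· ≤ ·) atTop
      (fun R : ℕ => ((cosetBall n H R).card : ℝ) ^ (1 / (R : ℝ))) :=
  (tendsto_growth_bound hn).isBoundedUnder_le.mono_le
    (Eventually.of_forall (rpow_card_cosetBall_le hn))

lemma graphGrowth_le (hn : 1 ≤ n) : graphGrowth n H ≤ 2 * n - 1 := by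
  rw [graphGrowth_eq, ← (tendsto_growth_bound hn).limsup_eq]
  exact limsup_le_limsup (Eventually.of_forall (rpow_card_cosetBall_le hn))
    (isCoboundedUnder_le_of_le atTop fun _ => by positivity)
    (tendsto_growth_bound hn).isBoundedUnder_le

end UpperBound

section LowerBound

open scoped Classical

variable {n : ℕ} {H : Subgroup (F n)}

def edgesWithin (A : Finset (Cosets n H)) : Finset (Cosets n H × (Fin n × Bool)) :=
  (A ×ˢ Finset.univ).filter fun q => rmul q.1 (sgen q.2) ∈ A

lemma boundaryCard_add_card_edgesWithin (A : Finset (Cosets n H)) :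
    boundaryCard A + (edgesWithin A).card = 2 * n * A.card := by
  have hbd : boundaryCard A
      = ((A ×ˢ Finset.univ).filter fun q => rmul q.1 (sgen q.2) ∉ A).card := by
    rw [boundaryCard, ← Nat.card_eq_finsetCard]
    exact Nat.card_congr (Equiv.subtypeEquivRight fun q => by simp)
  rw [hbd, edgesWithin, add_comm, Finset.card_filter_add_card_filter_not, Finset.card_product]
  simp [mul_comm]

lemma card_edgesWithin_cosetBall_succ_ge (R : ℕ) :
    2 * n * (cosetBall n H R).card + ((cosetBall n H (R + 1)).card - (cosetBall n H R).card)
      ≤ (edgesWithin (cosetBall n H (R + 1))).card := by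
  have hinner : cosetBall n H R ×ˢ Finset.univ
      ⊆ (edgesWithin (cosetBall n H (R + 1))).filter fun q => q.1 ∈ cosetBall n H R := by
    intro q hq
    have hq1 := mem_cosetBall.mp (Finset.mem_product.mp hq).1
    simp only [edgesWithin, Finset.mem_filter, Finset.mem_product, Finset.mem_univ, and_true,
      mem_cosetBall]
    exact ⟨⟨by omega, (cosetDist_rmul_sgen_le _ _).trans (by omega)⟩, hq1⟩
  have houter : Set.SurjOn Prod.fst
      (↑((edgesWithin (cosetBall n H (R + 1))).filter (fun q => q.1 ∉ cosetBall n H R)) :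
        Set (Cosets n H × (Fin n × Bool)))
      (↑(cosetBall n H (R + 1) \ cosetBall n H R) : Set (Cosets n H)) := by
    intro x hx
    obtain ⟨hx₁, hx₂⟩ := Finset.mem_sdiff.mp hx
    have hdist : cosetDist x = R + 1 := by
      have := mem_cosetBall.mp hx₁
      have := mt mem_cosetBall.mpr hx₂
      omega
    obtain ⟨p, hp⟩ := exists_cosetDist_rmul_sgen_le hdist
    refine ⟨(x, p), ?_, rfl⟩
    rw [Finset.mem_coe, Finset.mem_filter, edgesWithin, Finset.mem_filter, Finset.mem_product]
    exact ⟨⟨⟨hx₁, Finset.mem_univ _⟩, mem_cosetBall.mpr (hp.trans (Nat.le_succ R))⟩, hx₂⟩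
  rw [← Finset.card_filter_add_card_filter_not
      (fun q : Cosets n H × (Fin n × Bool) => q.1 ∈ cosetBall n H R),
    ← Finset.card_sdiff_of_subset (cosetBall_subset_succ R)]
  refine Nat.add_le_add ?_ (Finset.card_le_card_of_surjOn _ houter)
  simpa [mul_comm] using Finset.card_le_card hinner

lemma isoConst_le (A : Finset (Cosets n H)) (hA : A.Nonempty) :
    isoConst n H ≤ (boundaryCard A : ℝ) / (2 * n * A.card) :=
  csInf_le ⟨0, fun _ ⟨_, _, hr⟩ => hr ▸ by positivity⟩ ⟨A, hA, rfl⟩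

lemma one_le_card_cosetBall (R : ℕ) : 1 ≤ (cosetBall n H R).card :=
  Finset.card_pos.mpr ⟨_, mem_cosetBall.mpr ((cosetDist_mk_le 1).trans (by simp))⟩

lemma mul_card_cosetBall_le (hn : 1 ≤ n) (R : ℕ) :
    (2 * n - 1) * ((cosetBall n H R).card : ℝ)
      ≤ ((1 - isoConst n H) * (2 * n) - 1) * (cosetBall n H (R + 1)).card := by
  have hsplit : (boundaryCard (cosetBall n H (R + 1)) : ℝ)
      + (edgesWithin (cosetBall n H (R + 1))).card = 2 * n * (cosetBall n H (R + 1)).card := by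
    exact_mod_cast boundaryCard_add_card_edgesWithin _
  have hinner : 2 * n * ((cosetBall n H R).card : ℝ) + (cosetBall n H (R + 1)).card
      ≤ (edgesWithin (cosetBall n H (R + 1))).card + (cosetBall n H R).card := by
    have := Finset.card_le_card (cosetBall_subset_succ (H := H) R)
    have := card_edgesWithin_cosetBall_succ_ge (H := H) R
    exact_mod_cast (by omega : 2 * n * (cosetBall n H R).card + (cosetBall n H (R + 1)).card
      ≤ (edgesWithin (cosetBall n H (R + 1))).card + (cosetBall n H R).card)
  have hiso : isoConst n H * (2 * n * (cosetBall n H (R + 1)).card)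
      ≤ boundaryCard (cosetBall n H (R + 1)) := by
    have hpos : (0 : ℝ) < 2 * n * (cosetBall n H (R + 1)).card := by
      have : 1 ≤ (cosetBall n H (R + 1)).card := one_le_card_cosetBall _
      have : (1 : ℝ) ≤ n := by exact_mod_cast hn
      positivity
    exact (le_div_iff₀ hpos).mp
      (isoConst_le _ (Finset.card_pos.mp (one_le_card_cosetBall (R + 1))))
  linarith

lemma one_lt_one_sub_isoConst_mul (hn : 1 ≤ n) : 1 < (1 - isoConst n H) * (2 * n) := by
  have h0 := mul_card_cosetBall_le (H := H) hn 0
  have h1 : (1 : ℝ) ≤ (cosetBall n H 0).card := by exact_mod_cast one_le_card_cosetBall 0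
  have h2 : (1 : ℝ) ≤ n := by exact_mod_cast hn
  by_contra! hβ
  nlinarith [mul_nonpos_of_nonpos_of_nonneg (sub_nonpos.mpr hβ)
    (Nat.cast_nonneg (cosetBall n H 1).card)]

lemma pow_le_card_cosetBall (hn : 1 ≤ n) (R : ℕ) :
    ((2 * n - 1) / ((1 - isoConst n H) * (2 * n) - 1)) ^ R ≤ ((cosetBall n H R).card : ℝ) := by
  have hβ := sub_pos.mpr (one_lt_one_sub_isoConst_mul (H := H) hn)
  have h2n : (1 : ℝ) ≤ 2 * n - 1 := by
    have : (1 : ℝ) ≤ n := by exact_mod_cast hn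
    linarith
  induction R with
  | zero => simpa using one_le_card_cosetBall 0
  | succ R ih =>
    calc _ = (2 * n - 1) * ((2 * n - 1) / ((1 - isoConst n H) * (2 * n) - 1)) ^ R
          / ((1 - isoConst n H) * (2 * n) - 1) := by ring
      _ ≤ (2 * n - 1) * (cosetBall n H R).card / ((1 - isoConst n H) * (2 * n) - 1) := by gcongr
      _ ≤ (cosetBall n H (R + 1)).card := by
        rw [div_le_iff₀ hβ, mul_comm _ (_ - 1)]
        exact mul_card_cosetBall_le hn R

lemma le_graphGrowth (hn : 1 ≤ n) :
    (2 * n - 1) / ((1 - isoConst n H) * (2 * n) - 1) ≤ graphGrowth n H := by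
  have hq : 0 ≤ (2 * n - 1) / ((1 - isoConst n H) * (2 * n) - 1) := by
    have : (1 : ℝ) ≤ n := by exact_mod_cast hn
    exact div_nonneg (by linarith) (sub_pos.mpr (one_lt_one_sub_isoConst_mul hn)).le
  rw [graphGrowth_eq]
  refine le_limsup_of_frequently_le (Eventually.frequently ?_)
    (isBoundedUnder_rpow_card_cosetBall hn)
  filter_upwards [eventually_ne_atTop 0] with R hR
  calc _ = (((2 * n - 1) / ((1 - isoConst n H) * (2 * n) - 1)) ^ R) ^ (1 / (R : ℝ)) := by
        rw [one_div, Real.pow_rpow_inv_natCast hq hR]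
    _ ≤ _ := Real.rpow_le_rpow (by positivity) (pow_le_card_cosetBall hn R) (by positivity)

end LowerBound

theorem stmt12_general (n : ℕ) (hn : 2 ≤ n) (H : ℕ → Subgroup (F n))
    (hiso : Tendsto (fun k => isoConst n (H k)) atTop (nhds ((n - 1) / n))) :
    Tendsto (fun k => graphGrowth n (H k)) atTop (nhds (2 * n - 1)) := by
  have hn₁ : 1 ≤ n := by omega
  have hdefect : Tendsto (fun k => (1 - isoConst n (H k)) * (2 * n) - 1) atTop (nhds 1) := by
    convert ((tendsto_const_nhds (x := (1 : ℝ))).sub hiso).mul_const (2 * (n : ℝ)) |>.sub_const 1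
      using 2
    field_simp
    ring
  have hlower : Tendsto (fun k => (2 * n - 1) / ((1 - isoConst n (H k)) * (2 * n) - 1)) atTop
      (nhds (2 * n - 1)) := by
    have := (tendsto_const_nhds (x := 2 * (n : ℝ) - 1)).div hdefect one_ne_zero
    rwa [div_one] at this
  exact tendsto_of_tendsto_of_tendsto_of_le_of_le hlower tendsto_const_nhds
    (fun k => le_graphGrowth hn₁) (fun k => graphGrowth_le hn₁)

/-- If `(H_k)` is a sequence of non-trivial subgroups of `F_n`
(`n ≥ 2`) with `i(Γ_{H_k}) → (n−1)/n = i(T_n)`, then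
`growth(Γ_{H_k}) → 2n−1 = growth(T_n)`. -/
theorem stmt12 (n : ℕ) (hn : 2 ≤ n) (H : ℕ → Subgroup (F n))
    (hnontriv : ∀ k, H k ≠ ⊥)
    (hiso : Tendsto (fun k => isoConst n (H k)) atTop (nhds ((n - 1) / n))) :
    Tendsto (fun k => graphGrowth n (H k)) atTop (nhds (2 * n - 1)) :=
  stmt12_general n hn H hiso

end JM
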